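/- Let θ ∈ ℂ and let K be either ℚ or an imaginary quadratic number field (viewed as a subfield of ℂ). Suppose there exist real numbers k₀, l₀ > 0 and E, Q > 1 such that for every integer r ≥ 0 there are algebraic integers p_r and q_r in K with |q_r| < k₀·Qʳ and |q_r·θ − p_r| ≤ l₀·E^{−r}, and such that p_r·q_{r+1} ≠ p_{r+1}·q_r for all r ≥ 0. Then for all algebraic integers p and q in K with |q| ≥ 1/(2l₀), one has |θ − p/q| > 1/(c·|q|^{κ+1}), where κ = log Q / log E and c = 2k₀·Q·(2l₀·E)^κ. -/

import Mathlib

noncomputable section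

noncomputable def csqrt (w : ℂ) : ℂ := w ^ ((2 : ℂ))⁻¹

/-- `K` is the subfield `ℚ` of `ℂ`. -/
def IsRatSubfield (K : Subfield ℂ) : Prop := ∀ z : ℂ, z ∈ K ↔ ∃ a : ℚ, z = (a : ℂ)

/-- `K` is an imaginary quadratic number field viewed as a subfield of `ℂ`. -/
def IsImagQuadSubfield (K : Subfield ℂ) : Prop :=
  ∃ t : ℤ, t < 0 ∧ ∀ z : ℂ, z ∈ K ↔ ∃ a b : ℚ, z = (a : ℂ) + (b : ℂ) * csqrt (t : ℂ)

/-!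
The cross term `D = q_s P - p_s R` is a nonzero integer of `K` for `s = r` or `s = r + 1`, because
consecutive approximations are independent; so `1 ≤ |D|`, since `|D|² = D D̄` is a positive
rational integer. Writing `D = -q_s R (θ - P/R) + R (q_s θ - p_s)` and choosing `r` with
`2 l₀ |R| ≤ E^r ≤ 2 l₀ E |R|`, the second term is at most `1/2`, hence
`|q_s| |R| |θ - P/R| ≥ 1/2`, while `|q_s| < k₀ Q^(r+1) ≤ k₀ Q (2 l₀ E |R|)^κ` because `Q = E^κ`.
-/

theorem one_le_norm_of_isIntegral_of_normSq_eq_ratCast {z : ℂ} (hz : IsIntegral ℤ z) (h0 : z ≠ 0)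
    {a : ℚ} (ha : Complex.normSq z = a) : 1 ≤ ‖z‖ := by
  have hint : IsIntegral ℤ (a : ℂ) := by
    have : IsIntegral ℤ (z * starRingEnd ℂ z) :=
      hz.mul (hz.map (starRingEnd ℂ : ℂ →+* ℂ).toIntAlgHom)
    rwa [Complex.mul_conj, ha, Complex.ofReal_ratCast] at this
  obtain ⟨m, hm⟩ := hint.exists_int_iff_exists_rat.mp ⟨a, rfl⟩
  replace ha : Complex.normSq z = m := by exact_mod_cast ha.trans (by exact_mod_cast hm)
  have hm : (0 : ℝ) < m := ha ▸ Complex.normSq_pos.mpr h0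
  rw [← one_le_sq_iff₀ (norm_nonneg z), Complex.sq_norm, ha]
  exact Int.cast_one_le_of_pos (Int.cast_pos.mp hm)

theorem csqrt_sq (w : ℂ) : csqrt w ^ 2 = w := by
  simp [csqrt]

theorem Complex.re_eq_zero_and_im_sq_of_sq_eq_neg {s : ℂ} {t : ℝ} (hs : s ^ 2 = t) (ht : t < 0) :
    s.re = 0 ∧ s.im ^ 2 = -t := by
  have hre : s.re ^ 2 - s.im ^ 2 = t := by simpa [sq] using congrArg Complex.re hs
  have him : s.re * s.im + s.im * s.re = 0 := by simpa [sq] using congrArg Complex.im hs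
  have hre0 : s.re = 0 := by
    rcases mul_eq_zero.mp (show s.re * s.im = 0 by linarith) with h | h
    · exact h
    · nlinarith [sq_nonneg s.re]
  exact ⟨hre0, by rw [hre0] at hre; linarith⟩

theorem IsRatSubfield.exists_normSq_eq {K : Subfield ℂ} (hK : IsRatSubfield K) {z : ℂ}
    (hz : z ∈ K) : ∃ a : ℚ, Complex.normSq z = a := by
  obtain ⟨a, rfl⟩ := (hK z).mp hz
  exact ⟨a ^ 2, by simp [Complex.normSq_apply, sq]⟩

theorem IsImagQuadSubfield.exists_normSq_eq {K : Subfield ℂ} (hK : IsImagQuadSubfield K) {z : ℂ}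
    (hz : z ∈ K) : ∃ a : ℚ, Complex.normSq z = a := by
  obtain ⟨t, ht, hKt⟩ := hK
  obtain ⟨a, b, rfl⟩ := (hKt z).mp hz
  obtain ⟨hre, him⟩ := Complex.re_eq_zero_and_im_sq_of_sq_eq_neg (s := csqrt t) (t := t)
    (by simp [csqrt_sq]) (by exact_mod_cast ht)
  refine ⟨a ^ 2 - b ^ 2 * t, ?_⟩
  simp only [Complex.normSq_apply, Complex.add_re, Complex.add_im, Complex.mul_re, Complex.mul_im,
    Complex.ratCast_re, Complex.ratCast_im, hre]
  push_cast
  linear_combination (b : ℝ) ^ 2 * him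

theorem one_le_norm_of_isIntegral {K : Subfield ℂ} (hK : IsRatSubfield K ∨ IsImagQuadSubfield K)
    {z : ℂ} (hz : z ∈ K) (hint : IsIntegral ℤ z) (h0 : z ≠ 0) : 1 ≤ ‖z‖ := by
  obtain ⟨a, ha⟩ := hK.elim (·.exists_normSq_eq hz) (·.exists_normSq_eq hz)
  exact one_le_norm_of_isIntegral_of_normSq_eq_ratCast hint h0 ha

theorem sub_mul_ne_zero_or_of_mul_ne_mul {F : Type*} [CommRing F] [IsDomain F]
    {a b a' b' P R : F} (hR : R ≠ 0) (h : a * b' ≠ a' * b) :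
    b * P - a * R ≠ 0 ∨ b' * P - a' * R ≠ 0 := by
  by_contra! hD
  exact h <| mul_right_cancel₀ hR <| by linear_combination (-b') * hD.1 + b * hD.2

theorem norm_mul_sub_mul_le {F : Type*} [NormedField F] (θ P R a b : F) (hR : R ≠ 0) :
    ‖b * P - a * R‖ ≤ ‖b‖ * ‖R‖ * ‖θ - P / R‖ + ‖R‖ * ‖b * θ - a‖ := by
  have hD : b * P - a * R = -(b * R) * (θ - P / R) + R * (b * θ - a) := by field_simp; ring
  calc ‖b * P - a * R‖ ≤ ‖-(b * R) * (θ - P / R)‖ + ‖R * (b * θ - a)‖ := hD ▸ norm_add_le _ _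
    _ = _ := by simp only [norm_mul, norm_neg]

theorem pow_eq_pow_rpow_logb {E Q : ℝ} (hE : 0 < E) (hE1 : E ≠ 1) (hQ : 0 < Q) (n : ℕ) :
    Q ^ n = (E ^ n) ^ Real.logb E Q := by
  rw [← Real.rpow_pow_comm hE.le, Real.rpow_logb hE hE1 hQ]

theorem exists_pow_mem_Icc {x E : ℝ} (hx : 1 ≤ x) (hE : 1 < E) :
    ∃ r : ℕ, x ≤ E ^ r ∧ E ^ r ≤ x * E := by
  obtain ⟨n, hn, hn1⟩ := exists_nat_pow_near hx hE
  exact ⟨n + 1, hn1.le, by rw [pow_succ]; gcongr⟩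

theorem lt_norm_sub_div_of_approximations {F : Type*} [NormedField F] (O : Subring F)
    (hO : ∀ z ∈ O, z ≠ 0 → 1 ≤ ‖z‖) {θ : F} {k₀ l₀ E Q : ℝ} (hk₀ : 0 < k₀) (hl₀ : 0 < l₀) (hE : 1 < E) (hQ : 1 < Q)
    {p q : ℕ → F} (hp : ∀ r, p r ∈ O) (hqO : ∀ r, q r ∈ O)
    (hq : ∀ r : ℕ, ‖q r‖ < k₀ * Q ^ r) (happ : ∀ r : ℕ, ‖q r * θ - p r‖ ≤ l₀ / E ^ r)
    (hne : ∀ r : ℕ, p r * q (r + 1) ≠ p (r + 1) * q r)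
    {P R : F} (hP : P ∈ O) (hR : R ∈ O) (hRl : 1 / (2 * l₀) ≤ ‖R‖) :
    1 / (2 * k₀ * Q * (2 * l₀ * E) ^ Real.logb E Q * ‖R‖ ^ (Real.logb E Q + 1)) <
      ‖θ - P / R‖ := by
  set κ := Real.logb E Q
  have hRpos : 0 < ‖R‖ := lt_of_lt_of_le (by positivity) hRl
  have hR0 : R ≠ 0 := norm_pos_iff.mp hRpos
  have hx : 1 ≤ 2 * l₀ * ‖R‖ := by rwa [div_le_iff₀' (by positivity)] at hRl
  obtain ⟨r, hxr, hrx⟩ := exists_pow_mem_Icc hx hE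
  obtain ⟨s, hs, hrs, hsr⟩ : ∃ s, q s * P - p s * R ≠ 0 ∧ r ≤ s ∧ s ≤ r + 1 := by
    rcases sub_mul_ne_zero_or_of_mul_ne_mul hR0 (hne r) with h | h
    · exact ⟨r, h, le_rfl, r.le_succ⟩
    · exact ⟨r + 1, h, r.le_succ, le_rfl⟩
  have htail : ‖R‖ * ‖q s * θ - p s‖ ≤ 1 / 2 := by
    have hEs : 2 * l₀ * ‖R‖ ≤ E ^ s := hxr.trans (pow_le_pow_right₀ hE.le hrs)
    calc ‖R‖ * ‖q s * θ - p s‖ ≤ ‖R‖ * (l₀ / E ^ s) := by gcongr; exact happ s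
      _ ≤ 1 / 2 := by
        rw [mul_div_assoc', div_le_div_iff₀ (by positivity) two_pos]; linarith
  have hqs : ‖q s‖ < k₀ * Q * (2 * l₀ * E) ^ κ * ‖R‖ ^ κ :=
    calc ‖q s‖ < k₀ * Q ^ s := hq s
      _ ≤ k₀ * Q * Q ^ r := by rw [mul_assoc, ← pow_succ']; gcongr; exact hQ.le
      _ = k₀ * Q * (E ^ r) ^ κ := by
        rw [pow_eq_pow_rpow_logb (by linarith) hE.ne' (by linarith)]
      _ ≤ k₀ * Q * (2 * l₀ * ‖R‖ * E) ^ κ := by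
        gcongr
        exact Real.logb_nonneg hE hQ.le
      _ = k₀ * Q * (2 * l₀ * E) ^ κ * ‖R‖ ^ κ := by
        rw [show 2 * l₀ * ‖R‖ * E = 2 * l₀ * E * ‖R‖ by ring, Real.mul_rpow (by positivity) hRpos.le]
        ring
  have hmain : 1 / 2 ≤ ‖q s‖ * ‖R‖ * ‖θ - P / R‖ := by
    have h1 : 1 ≤ ‖q s * P - p s * R‖ :=
      hO _ (sub_mem (mul_mem (hqO s) hP) (mul_mem (hp s) hR)) hs
    linarith [norm_mul_sub_mul_le θ P R (p s) (q s) hR0]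
  rw [Real.rpow_add hRpos, Real.rpow_one, div_lt_iff₀ (by positivity)]
  nlinarith [norm_nonneg (q s), norm_nonneg (θ - P / R)]

/-- **Diophantine approximation lemma** (Lemma 7 of the paper): a sequence of good
approximations in `𝒪_K` yields an effective irrationality measure for `θ`. -/
theorem approximation_lemma
    (K : Subfield ℂ) (hK : IsRatSubfield K ∨ IsImagQuadSubfield K)
    (θ : ℂ) (k₀ l₀ E Q : ℝ)
    (hk₀ : 0 < k₀) (hl₀ : 0 < l₀) (hE : 1 < E) (hQ : 1 < Q)
    (p q : ℕ → ℂ)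
    (hmem : ∀ r : ℕ, p r ∈ K ∧ IsIntegral ℤ (p r) ∧ q r ∈ K ∧ IsIntegral ℤ (q r))
    (hq : ∀ r : ℕ, ‖q r‖ < k₀ * Q ^ r)
    (happ : ∀ r : ℕ, ‖q r * θ - p r‖ ≤ l₀ / E ^ r)
    (hne : ∀ r : ℕ, p r * q (r + 1) ≠ p (r + 1) * q r)
    (κ c : ℝ)
    (hκ : κ = Real.log Q / Real.log E)
    (hc : c = 2 * k₀ * Q * (2 * l₀ * E) ^ κ) :
    ∀ P R : ℂ, P ∈ K → IsIntegral ℤ P → R ∈ K → IsIntegral ℤ R →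
      1 / (2 * l₀) ≤ ‖R‖ →
      1 / (c * ‖R‖ ^ (κ + 1)) < ‖θ - P / R‖ := by
  intro P R hP hPint hR hRint hRl
  let O : Subring ℂ := K.toSubring ⊓ (integralClosure ℤ ℂ).toSubring
  have hmemO {z : ℂ} (hz : z ∈ K) (hint : IsIntegral ℤ z) : z ∈ O := ⟨hz, hint⟩
  rw [Real.log_div_log] at hκ
  subst hκ hc
  exact lt_norm_sub_div_of_approximations O
    (fun z hz => one_le_norm_of_isIntegral hK hz.1 hz.2) hk₀ hl₀ hE hQ
    (fun r => hmemO (hmem r).1 (hmem r).2.1) (fun r => hmemO (hmem r).2.2.1 (hmem r).2.2.2)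
    hq happ hne (hmemO hP hPint) (hmemO hR hRint) hRl
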